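/- Let $\mu$ be a Borel measure on $\mathbb{R}$ which is finite on compact sets, let $f : \mathbb{R} \to \mathbb{R}$ be an increasing homeomorphism with $f_*\mu = \lambda \mu$ for some $0 < \lambda < 1$, and suppose $x \in \mathbb{R}$ satisfies $x < f(x)$ and $\mu[x, f(x)) < \infty$. Then $\mu[x, \sup_{k \ge 0} f^k(x)) = \sum_{k=0}^{\infty} \lambda^k \mu[x, f(x))$, and if additionally $\mu[y, +\infty) = \infty$ for all $y \in \mathbb{R}$, then $x_0 := \sup_{k \ge 0} f^k(x)$ is finite and is a fixed point of $f$. -/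
import Mathlib


open MeasureTheory Set

theorem stmt_4 (μ : Measure ℝ)
    (hfin : ∀ K : Set ℝ, IsCompact K → μ K < ⊤)
    (f : ℝ ≃ₜ ℝ) (hmono : StrictMono f)
    (lam : ℝ) (hlam0 : 0 < lam) (hlam1 : lam < 1)
    (hpush : ∀ X : Set ℝ, MeasurableSet X → μ (⇑f '' X) = ENNReal.ofReal lam * μ X)
    (x : ℝ) (hx : x < f x) (hxfin : μ (Ico x (f x)) < ⊤) :
    μ (⋃ k : ℕ, Ico x ((⇑f)^[k] x)) =
      ∑' k : ℕ, (ENNReal.ofReal lam) ^ k * μ (Ico x (f x)) ∧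
    ((∀ y : ℝ, μ (Ici y) = ⊤) →
      BddAbove (Set.range fun k : ℕ => (⇑f)^[k] x) ∧
      f (⨆ k : ℕ, (⇑f)^[k] x) = ⨆ k : ℕ, (⇑f)^[k] x) := by
  set a : ℕ → ℝ := fun k => (⇑f)^[k] x with ha
  set L : ENNReal := ENNReal.ofReal lam with hL
  have hstep : ∀ k, a (k + 1) = f (a k) := fun k => Function.iterate_succ_apply' (⇑f) k x
  have ha0 : a 0 = x := rfl
  have ha1 : a 1 = f x := by rw [hstep, ha0]
  have hsucc : ∀ k, a k < a (k + 1) := by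
    intro k
    induction k with
    | zero => rw [hstep, ha0]; exact hx
    | succ n ih => rw [hstep (n + 1), hstep n]; exact hmono (by rw [hstep n] at ih; exact ih)
  have hmonoA : StrictMono a := strictMono_nat_of_lt_succ hsucc
  have himg : ∀ p q : ℝ, ⇑f '' Ico p q = Ico (f p) (f q) := fun p q =>
    (StrictMono.orderIsoOfSurjective (⇑f) hmono f.surjective).image_Ico p q
  have hμk : ∀ k, μ (Ico (a k) (a (k + 1))) = L ^ k * μ (Ico x (f x)) := by
    intro k
    induction k with
    | zero => rw [ha0, ha1, pow_zero, one_mul]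
    | succ n ih =>
        have heq : Ico (a (n + 1)) (a (n + 1 + 1)) = ⇑f '' Ico (a n) (a (n + 1)) := by
          rw [himg, ← hstep, ← hstep]
        rw [heq, hpush _ measurableSet_Ico, ih, pow_succ]
        ring
  have hUnion : (⋃ k, Ico x (a k)) = ⋃ k, Ico (a k) (a (k + 1)) := by
    ext y
    simp only [mem_iUnion, mem_Ico]
    constructor
    · rintro ⟨k, hxy, hyk⟩
      induction k with
      | zero => exact absurd (lt_of_le_of_lt hxy hyk) (lt_irrefl _)
      | succ n ih =>
          by_cases hc : y < a n
          · exact ih hc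
          · exact ⟨n, le_of_not_gt hc, hyk⟩
    · rintro ⟨j, h1, h2⟩
      exact ⟨j + 1, le_trans (ha0 ▸ hmonoA.monotone (Nat.zero_le j)) h1, h2⟩
  have hdisj : Pairwise (Function.onFun Disjoint fun k => Ico (a k) (a (k + 1))) := by
    intro i j hij
    refine Ico_disjoint_Ico.mpr ?_
    rcases lt_or_gt_of_ne hij with h | h
    · exact le_trans (min_le_left _ _) (le_trans (hmonoA.monotone h) (le_max_right _ _))
    · exact le_trans (min_le_right _ _) (le_trans (hmonoA.monotone h) (le_max_left _ _))
  have hmeas : μ (⋃ k, Ico x (a k)) = ∑' k : ℕ, L ^ k * μ (Ico x (f x)) := by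
    rw [hUnion, measure_iUnion hdisj fun k => measurableSet_Ico]
    exact tsum_congr hμk
  refine ⟨hmeas, ?_⟩
  intro hinf
  have hsum_lt : (∑' k : ℕ, L ^ k * μ (Ico x (f x))) < ⊤ := by
    rw [ENNReal.tsum_mul_right, ENNReal.tsum_geometric]
    have hL1 : L < 1 := by
      rw [hL]
      exact ENNReal.ofReal_lt_one.mpr hlam1
    refine ENNReal.mul_lt_top ?_ hxfin
    simp [ENNReal.inv_lt_top, tsub_pos_iff_lt, hL1]
  have hbdd : BddAbove (Set.range a) := by
    by_contra hnb
    have hIci : (⋃ k, Ico x (a k)) = Ici x := by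
      ext y
      simp only [mem_iUnion, mem_Ico, mem_Ici]
      constructor
      · rintro ⟨k, h1, _⟩; exact h1
      · intro hy
        obtain ⟨z, ⟨k, rfl⟩, hz⟩ := not_bddAbove_iff.mp hnb y
        exact ⟨k, hy, hz⟩
    rw [hIci, hinf x] at hmeas
    exact absurd hmeas.symm (ne_of_lt hsum_lt)
  refine ⟨hbdd, ?_⟩
  have hbdd' : BddAbove (Set.range fun k => a (k + 1)) :=
    hbdd.mono (range_subset_iff.mpr fun k => mem_range_self (k + 1))
  have h1 : f (⨆ k, a k) = ⨆ k, f (a k) :=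
    Monotone.map_ciSup_of_continuousAt f.continuous.continuousAt hmono.monotone hbdd
  have h2 : (⨆ k, f (a k)) = ⨆ k, a (k + 1) := by
    exact iSup_congr fun k => (hstep k).symm
  have h3 : (⨆ k, a (k + 1)) = ⨆ k, a k := by
    apply le_antisymm
    · exact ciSup_le fun k => le_ciSup hbdd (k + 1)
    · exact ciSup_le fun k =>
        le_trans (hmonoA.monotone (Nat.le_succ k)) (le_ciSup hbdd' k)
  rw [h1, h2, h3]
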